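/- For every leakage α ∈ [0,∞), threshold ϑ > 0, and all sequences a, ν (with fixed spike times), ‖LIF_{ϑ,α}(a + ν) - LIF_{ϑ,α}(a)‖_{A,α} ≤ 3·⌈‖ν‖_{A,α}/ϑ⌉·ϑ. -/
import Mathlib


/-- Rounding toward zero to the grid `ϑ·ℤ`: `ϑ · sgn(v) · ⌊|v|/ϑ⌋`. -/
noncomputable def qmod (ϑ v : ℝ) : ℝ :=
  Real.sign v * ((⌊|v| / ϑ⌋ : ℤ) : ℝ) * ϑ

/-- Membrane potential (before reset) of the reset-to-mod leaky
integrate-and-fire neuron with leakage `α` and spike times `t`: between events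
the potential decays by `e^{-α Δt}`, jumps by the incoming amplitude, and after
each event the emitted amplitude `qmod ϑ v` is subtracted. -/
noncomputable def LIFv (ϑ α : ℝ) (t a : ℕ → ℝ) : ℕ → ℝ
  | 0 => a 0
  | n + 1 =>
      (LIFv ϑ α t a n - qmod ϑ (LIFv ϑ α t a n)) * Real.exp (-α * (t (n + 1) - t n))
        + a (n + 1)

/-- Output spike amplitudes of the reset-to-mod leaky integrate-and-fire neuron. -/
noncomputable def LIFb (ϑ α : ℝ) (t a : ℕ → ℝ) (n : ℕ) : ℝ := qmod ϑ (LIFv ϑ α t a n)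

/-- The leaky Alexiewicz norm of the first `N` entries of a sequence with spike
times `t`. -/
noncomputable def LAnorm (α : ℝ) (t : ℕ → ℝ) (N : ℕ) (c : ℕ → ℝ) : ℝ :=
  ⨆ n : Fin N, |∑ j ∈ Finset.range (n.val + 1), c j * Real.exp (-α * (t n.val - t j))|

lemma abs_sub_qmod_lt {ϑ : ℝ} (hϑ : 0 < ϑ) (v : ℝ) : |v - qmod ϑ v| < ϑ := by
  rcases lt_trichotomy v 0 with hv | hv | hv
  · have hs : Real.sign v = -1 := Real.sign_of_neg hv
    have habs : |v| = -v := abs_of_neg hv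
    have h1 : 0 ≤ -v - ⌊-v / ϑ⌋ * ϑ := Int.sub_floor_div_mul_nonneg (-v) hϑ
    have h2 : -v - ⌊-v / ϑ⌋ * ϑ < ϑ := Int.sub_floor_div_mul_lt (-v) hϑ
    rw [qmod, hs, habs, abs_lt]
    constructor <;> nlinarith
  · subst hv
    simp [qmod, Real.sign_zero, hϑ, abs_of_pos hϑ]
  · have hs : Real.sign v = 1 := Real.sign_of_pos hv
    have habs : |v| = v := abs_of_pos hv
    have h1 : 0 ≤ v - ⌊v / ϑ⌋ * ϑ := Int.sub_floor_div_mul_nonneg v hϑ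
    have h2 : v - ⌊v / ϑ⌋ * ϑ < ϑ := Int.sub_floor_div_mul_lt v hϑ
    rw [qmod, hs, habs, abs_lt]
    constructor <;> nlinarith

lemma sum_decay (α : ℝ) (t c : ℕ → ℝ) (m n : ℕ) :
    ∑ j ∈ Finset.range m, c j * Real.exp (-α * (t (n+1) - t j))
      = (∑ j ∈ Finset.range m, c j * Real.exp (-α * (t n - t j)))
          * Real.exp (-α * (t (n+1) - t n)) := by
  rw [Finset.sum_mul]
  apply Finset.sum_congr rfl
  intro j _
  rw [mul_assoc, ← Real.exp_add]
  ring_nf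

lemma sum_shift (α : ℝ) (t c : ℕ → ℝ) (n : ℕ) :
    ∑ j ∈ Finset.range (n+2), c j * Real.exp (-α * (t (n+1) - t j))
      = (∑ j ∈ Finset.range (n+1), c j * Real.exp (-α * (t n - t j)))
          * Real.exp (-α * (t (n+1) - t n)) + c (n+1) := by
  rw [Finset.sum_range_succ, sum_decay]
  simp

lemma lif_sum (ϑ α : ℝ) (t a : ℕ → ℝ) (n : ℕ) :
    ∑ j ∈ Finset.range (n+1), a j * Real.exp (-α * (t n - t j))
      = LIFv ϑ α t a n
        + ∑ j ∈ Finset.range n, LIFb ϑ α t a j * Real.exp (-α * (t n - t j)) := by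
  induction n with
  | zero => simp [LIFv]
  | succ n ih =>
    rw [sum_shift, ih, Finset.sum_range_succ, sum_decay]
    simp only [LIFv, LIFb, sub_self, mul_zero, Real.exp_zero, mul_one]
    ring

lemma sum_LIFb (ϑ α : ℝ) (t c : ℕ → ℝ) (n : ℕ) :
    ∑ j ∈ Finset.range (n+1), LIFb ϑ α t c j * Real.exp (-α * (t n - t j))
      = ∑ j ∈ Finset.range (n+1), c j * Real.exp (-α * (t n - t j))
        - (LIFv ϑ α t c n - LIFb ϑ α t c n) := by
  rw [Finset.sum_range_succ, lif_sum ϑ]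
  simp

lemma LIFv_congr (ϑ α : ℝ) (t a b : ℕ → ℝ) (n : ℕ) (h : ∀ j ≤ n, a j = b j) :
    LIFv ϑ α t a n = LIFv ϑ α t b n := by
  induction n with
  | zero => simpa [LIFv] using h 0 le_rfl
  | succ n ih =>
    have h1 : ∀ j ≤ n, a j = b j := fun j hj => h j (hj.trans n.le_succ)
    simp only [LIFv, ih h1, h (n+1) le_rfl]

/-- Lipschitz-style upper bound with constant `γ(α) ≤ 3` for the
reset-to-mod leaky integrate-and-fire neuron:
`‖LIF_{ϑ,α}(a+ν) - LIF_{ϑ,α}(a)‖_{A,α} ≤ 3·⌈‖ν‖_{A,α}/ϑ⌉·ϑ`. -/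
theorem LIF_lipschitz_bound (ϑ α : ℝ) (hϑ : 0 < ϑ) (hα : 0 ≤ α)
    (t : ℕ → ℝ) (ht : StrictMono t) (N : ℕ) (a ν : ℕ → ℝ) :
    LAnorm α t N (fun n => LIFb ϑ α t (fun i => a i + ν i) n - LIFb ϑ α t a n)
      ≤ 3 * (⌈LAnorm α t N ν / ϑ⌉ : ℝ) * ϑ := by
  rcases Nat.eq_zero_or_pos N with hN | hN
  · subst hN
    simp [LAnorm, Real.iSup_of_isEmpty, zero_div]
  haveI : Nonempty (Fin N) := ⟨⟨0, hN⟩⟩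
  set x := LAnorm α t N ν with hxdef
  have hle : ∀ n : Fin N,
      |∑ j ∈ Finset.range (n.val + 1), ν j * Real.exp (-α * (t n.val - t j))| ≤ x := by
    intro n
    rw [hxdef, LAnorm]
    exact le_ciSup (f := fun n : Fin N =>
      |∑ j ∈ Finset.range (n.val + 1), ν j * Real.exp (-α * (t n.val - t j))|)
      (Set.Finite.bddAbove (Set.finite_range _)) n
  have hx0 : 0 ≤ x := le_trans (abs_nonneg _) (hle ⟨0, hN⟩)
  rcases eq_or_lt_of_le hx0 with hx | hx
  · -- x = 0: all perturbation partial sums vanish, hence ν j = 0 for j < N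
    have hS : ∀ n < N, ∑ j ∈ Finset.range (n + 1), ν j * Real.exp (-α * (t n - t j)) = 0 := by
      intro n hn
      have := hle ⟨n, hn⟩
      rw [← hx] at this
      exact abs_eq_zero.mp (le_antisymm this (abs_nonneg _))
    have hν : ∀ j < N, ν j = 0 := by
      intro j hj
      cases j with
      | zero => simpa using hS 0 hj
      | succ m =>
        have h1 := hS (m+1) hj
        have h2 := hS m (Nat.lt_of_succ_lt hj)
        rw [sum_shift, h2] at h1
        simpa using h1
    rw [LAnorm]
    apply ciSup_le
    intro n
    have hz : ∀ j ∈ Finset.range (n.val + 1),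
        (LIFb ϑ α t (fun i => a i + ν i) j - LIFb ϑ α t a j)
          * Real.exp (-α * (t n.val - t j)) = 0 := by
      intro j hj
      have hjN : j < N := lt_of_lt_of_le (Finset.mem_range.mp hj) n.isLt
      have : LIFv ϑ α t (fun i => a i + ν i) j = LIFv ϑ α t a j := by
        apply LIFv_congr
        intro k hk
        have : ν k = 0 := hν k (lt_of_le_of_lt hk hjN)
        simp [this]
      simp [LIFb, this]
    rw [Finset.sum_eq_zero hz]
    rw [← hx] at hxdef ⊢
    simp [← hxdef]
  · -- x > 0
    have hceil1 : (1 : ℝ) ≤ (⌈x / ϑ⌉ : ℤ) := by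
      exact_mod_cast Int.ceil_pos.mpr (div_pos hx hϑ)
    have hxle : x ≤ (⌈x / ϑ⌉ : ℤ) * ϑ := by
      rw [← div_le_iff₀ hϑ] at *
      exact Int.le_ceil _
    rw [LAnorm]
    apply ciSup_le
    intro n
    have hsplit : ∑ j ∈ Finset.range (n.val + 1),
        (LIFb ϑ α t (fun i => a i + ν i) j - LIFb ϑ α t a j)
          * Real.exp (-α * (t n.val - t j))
      = (∑ j ∈ Finset.range (n.val + 1), ν j * Real.exp (-α * (t n.val - t j)))
        - ((LIFv ϑ α t (fun i => a i + ν i) n.val - LIFb ϑ α t (fun i => a i + ν i) n.val)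
            - (LIFv ϑ α t a n.val - LIFb ϑ α t a n.val)) := by
      simp only [sub_mul, Finset.sum_sub_distrib]
      rw [sum_LIFb, sum_LIFb]
      have : ∑ j ∈ Finset.range (n.val + 1), (a j + ν j) * Real.exp (-α * (t n.val - t j))
          = ∑ j ∈ Finset.range (n.val + 1), a j * Real.exp (-α * (t n.val - t j))
            + ∑ j ∈ Finset.range (n.val + 1), ν j * Real.exp (-α * (t n.val - t j)) := by
        rw [← Finset.sum_add_distrib]
        apply Finset.sum_congr rfl
        intro j _
        ring
      rw [this]
      ring
    rw [hsplit]
    have h1 : |LIFv ϑ α t (fun i => a i + ν i) n.val - LIFb ϑ α t (fun i => a i + ν i) n.val| < ϑ :=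
      abs_sub_qmod_lt hϑ _
    have h2 : |LIFv ϑ α t a n.val - LIFb ϑ α t a n.val| < ϑ := abs_sub_qmod_lt hϑ _
    have h3 := hle n
    have habs : |(∑ j ∈ Finset.range (n.val + 1), ν j * Real.exp (-α * (t n.val - t j)))
        - ((LIFv ϑ α t (fun i => a i + ν i) n.val - LIFb ϑ α t (fun i => a i + ν i) n.val)
            - (LIFv ϑ α t a n.val - LIFb ϑ α t a n.val))| ≤ x + (ϑ + ϑ) := by
      calc _ ≤ |∑ j ∈ Finset.range (n.val + 1), ν j * Real.exp (-α * (t n.val - t j))|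
            + |(LIFv ϑ α t (fun i => a i + ν i) n.val - LIFb ϑ α t (fun i => a i + ν i) n.val)
            - (LIFv ϑ α t a n.val - LIFb ϑ α t a n.val)| := abs_sub _ _
        _ ≤ _ := by
            have := abs_sub (LIFv ϑ α t (fun i => a i + ν i) n.val - LIFb ϑ α t (fun i => a i + ν i) n.val) (LIFv ϑ α t a n.val - LIFb ϑ α t a n.val)
            linarith
    refine habs.trans ?_
    nlinarith [hceil1, hxle, hϑ]
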